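/- arXiv:1310.7536 — 3 statements merged into one kernel-verified Lean document; each statement's English description precedes it below -/
import Mathlib

section
/- Let n be odd and g ∈ ℤ/(n+1)ℤ. Then the Varshamov–Tenengol'ts code V_g is closed under the following operation for every i ∈ {1,…,n} with i ≠ (n+1)/2: if v ∈ V_g has v_i = v_{n+1−i} (both 0 or both 1), then the word v' obtained from v by complementing both coordinates i and n+1−i is also in V_g. Consequently, pairing coordinate i with coordinate n+1−i for i ≠ (n+1)/2 and leaving coordinate (n+1)/2 as a single bit, V_g is generalized ternary, i.e., 𝔖^{(n−1)/2}(𝔖̃^{(n−1)/2}(V_g)) = V_g where the maps act on the paired coordinates. -/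
/-
The coordinate weights `i` and `n + 1 - i` of a pair add up to `n + 1 ≡ 0`, so a pair whose two
bits are equal contributes `0` to the VT syndrome whatever that common bit is. Complementing such a
pair therefore preserves the syndrome, and two words with the same middle bit and the same
`𝔖̃`-image differ exactly by complementing some of these pairs.
-/

/-- The Varshamov–Tenengol'ts code `V_g = {x ∈ {0,1}ⁿ : Σᵢ i·xᵢ ≡ g (mod n+1)}`
(coordinates indexed `1,…,n`, here `i : Fin n` stands for coordinate `i+1`). -/
def VT (n : ℕ) (g : ZMod (n + 1)) : Set (Fin n → Fin 2) :=
  {x | ∑ i : Fin n, ((((i : ℕ) + 1 : ℕ) : ZMod (n + 1)) * ((x i : ℕ) : ZMod (n + 1))) = g}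

/-- The map `𝔖̃` on a binary pair: `00 ↦ 0`, `11 ↦ 0`, `01 ↦ 1`, `10 ↦ 2`. -/
def Stilde2 (p : Fin 2 × Fin 2) : Fin 3 :=
  if p.1 = p.2 then 0 else if p.1 = 0 then 1 else 2

theorem Finset.sum_mul_eq_sum_mul_of_involutive {ι R : Type*} [Fintype ι] [Ring R]
    {σ : ι → ι} (hσ : Function.Involutive σ) {w x v : ι → R} (hw : ∀ i, w (σ i) = -w i)
    (hfix : ∀ i, σ i = i → x i = v i)
    (hpair : ∀ i, x i = v i ∨ (x i = x (σ i) ∧ v i = v (σ i))) :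
    ∑ i, w i * x i = ∑ i, w i * v i := by
  have hpartner : ∀ i, x i = v i → x (σ i) = v (σ i) := fun i hi => by
    rcases hpair (σ i) with h | ⟨hx, hv⟩
    · exact h
    · rw [hx, hv, hσ i, hi]
  rw [← sub_eq_zero, ← Finset.sum_sub_distrib]
  refine Finset.sum_ninvolution σ (fun i => ?_) (fun i hi hσi => hi ?_)
    (fun _ => Finset.mem_univ _) hσ
  · rcases hpair i with h | ⟨hx, hv⟩
    · rw [h, hpartner i h]; abel
    · rw [← hx, ← hv, hw]; noncomm_ring
  · rw [hfix i hσi, sub_self]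

theorem natCast_rev_add_one (n : ℕ) (i : Fin n) :
    (((Fin.rev i : ℕ) + 1 : ℕ) : ZMod (n + 1)) = -(((i : ℕ) + 1 : ℕ) : ZMod (n + 1)) := by
  refine eq_neg_of_add_eq_zero_left ?_
  rw [← Nat.cast_add, Fin.val_rev, ← ZMod.natCast_self (n + 1)]
  congr 1
  omega

theorem Stilde2_eq_Stilde2_iff {a b c d : Fin 2} :
    Stilde2 (a, b) = Stilde2 (c, d) ↔ (a = c ∧ b = d) ∨ (a = b ∧ c = d) := by
  revert a b c d; decide

theorem mem_VT_of_eq_or_pair_const {n : ℕ} {g : ZMod (n + 1)} {x v : Fin n → Fin 2}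
    (hv : v ∈ VT n g) (hfix : ∀ i, Fin.rev i = i → x i = v i)
    (hpair : ∀ i, x i = v i ∨ (x i = x (Fin.rev i) ∧ v i = v (Fin.rev i))) :
    x ∈ VT n g := by
  simp only [VT, Set.mem_ofPred_eq] at hv ⊢
  rw [← hv]
  refine Finset.sum_mul_eq_sum_mul_of_involutive Fin.rev_involutive (natCast_rev_add_one n)
    (fun i hi => by rw [hfix i hi]) fun i => ?_
  exact (hpair i).imp (fun h => by rw [h]) fun h => ⟨by rw [h.1], by rw [h.2]⟩

theorem complement_pair_mem_VT {n : ℕ} {g : ZMod (n + 1)} {v : Fin n → Fin 2}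
    (hv : v ∈ VT n g) {i : Fin n} (hi : Fin.rev i ≠ i) (hvi : v i = v (Fin.rev i)) :
    (fun j => if j = i ∨ j = Fin.rev i then 1 - v j else v j) ∈ VT n g := by
  refine mem_VT_of_eq_or_pair_const hv (fun j hj => ?_) fun j => ?_
  · have hj' : ¬(j = i ∨ j = Fin.rev i) := by
      rintro (rfl | rfl)
      exacts [hi hj, hi (by simpa using hj.symm)]
    simp only [hj', if_false]
  · by_cases hj : j = i ∨ j = Fin.rev i
    · right
      rcases hj with rfl | rfl <;> simp [hvi]
    · left
      simp only [hj, if_false]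

theorem VT_odd_is_generalized_ternary_general (n : ℕ) (g : ZMod (n + 1)) :
    (∀ v ∈ VT n g, ∀ i : Fin n, (i : ℕ) + 1 ≠ (n + 1) / 2 → v i = v (Fin.rev i) →
      (fun j => if j = i ∨ j = Fin.rev i then 1 - v j else v j) ∈ VT n g) ∧
    {x : Fin n → Fin 2 | ∃ v ∈ VT n g,
        (∀ i : Fin n, Fin.rev i = i → x i = v i) ∧
        ∀ i : Fin n, Stilde2 (x i, x (Fin.rev i)) = Stilde2 (v i, v (Fin.rev i))} =
      VT n g := by
  refine ⟨fun v hv i hi hvi => complement_pair_mem_VT hv ?_ hvi, ?_⟩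
  · intro hrev
    have := congrArg Fin.val hrev
    rw [Fin.val_rev] at this
    omega
  · refine Set.Subset.antisymm ?_ fun x hx => ⟨x, hx, fun _ _ => rfl, fun _ => rfl⟩
    rintro x ⟨v, hv, hfix, hst⟩
    exact mem_VT_of_eq_or_pair_const hv hfix fun i =>
      (Stilde2_eq_Stilde2_iff.1 (hst i)).imp And.left id

/-- For `n` odd, the VT code `V_g` is closed under complementing a pair of coordinates
`i ≠ (n+1)/2` and `n+1-i` (0-based: `i` and `Fin.rev i`) whose entries are equal;
consequently, pairing coordinate `i` with `n+1-i` and leaving the middle coordinate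
`(n+1)/2` as a single bit, `V_g` is generalized ternary:
`𝔖^{(n-1)/2}(𝔖̃^{(n-1)/2}(V_g)) = V_g`, i.e. the set of binary words agreeing with some
codeword in the middle bit and in the pairwise `𝔖̃`-image is exactly `V_g`. -/
theorem VT_odd_is_generalized_ternary (n : ℕ) (hn : Odd n) (g : ZMod (n + 1)) :
    (∀ v ∈ VT n g, ∀ i : Fin n, (i : ℕ) + 1 ≠ (n + 1) / 2 → v i = v (Fin.rev i) →
      (fun j => if j = i ∨ j = Fin.rev i then 1 - v j else v j) ∈ VT n g) ∧
    {x : Fin n → Fin 2 | ∃ v ∈ VT n g,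
        (∀ i : Fin n, Fin.rev i = i → x i = v i) ∧
        ∀ i : Fin n, Stilde2 (x i, x (Fin.rev i)) = Stilde2 (v i, v (Fin.rev i))} =
      VT n g :=
  VT_odd_is_generalized_ternary_general n g
end

section
/- Let q > 2, m ≥ 1, and let C' ⊆ ℤ_q^m be single-error-correcting for the channel ℛ_q with |C'| = K. Identify ℤ_q with {0,1,…,q−1} ⊆ ℤ and define C = {z ∈ {0,…,q−1}^{2m−1} : (z_1, ((z_{2j+1} − z_{2j}) mod q)_{j=1,…,m−1}) ∈ C'} (the first outer symbol is sent directly, the remaining m−1 outer symbols are encoded as differences of pairs). Then |C| = q^{m−1}·K and Δ(x,y) ≥ 2 for all distinct x, y ∈ C, i.e., C is a 1-code of odd length 2m−1 over the q-ary asymmetric channel. -/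
/-- `N(x,y) = Σᵢ max(yᵢ - xᵢ, 0)` for words over `{0,…,q-1} ⊆ ℤ`. -/
def Nasym {n q : ℕ} (x y : Fin n → Fin q) : ℤ :=
  ∑ i, max (((y i : ℕ) : ℤ) - ((x i : ℕ) : ℤ)) 0

/-- The asymmetric distance `Δ(x,y) = max(N(x,y), N(y,x))`. -/
def Dasym {n q : ℕ} (x y : Fin n → Fin q) : ℤ :=
  max (Nasym x y) (Nasym y x)

/-- The `ℛ_q`-ball of `c ∈ ℤ_qᵐ`: words obtained from `c` by changing at most one
coordinate by `±1 (mod q)`. -/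
def RBall {q m : ℕ} (c : Fin m → ZMod q) : Set (Fin m → ZMod q) :=
  {d | d = c ∨ ∃ i, (d i = c i + 1 ∨ d i = c i - 1) ∧ ∀ j, j ≠ i → d j = c j}

/-- The outer word `(z_1, ((z_{2j+1} - z_{2j}) mod q)_{j=1,…,m-1})` of a word
`z ∈ {0,…,q-1}^{2m-1}` (first symbol sent directly, then pairwise differences). -/
def oddOuter (q m : ℕ) (z : Fin (2 * m - 1) → Fin q) : Fin m → ZMod q :=
  fun j =>
    if h : (j : ℕ) = 0 then ((z ⟨0, by have := j.isLt; omega⟩ : ℕ) : ZMod q)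
    else ((z ⟨2 * (j : ℕ), by have := j.isLt; omega⟩ : ℕ) : ZMod q) -
         ((z ⟨2 * (j : ℕ) - 1, by have := j.isLt; omega⟩ : ℕ) : ZMod q)

/-!
If `Δ(x, y) ≤ 1`, the integer difference `d = x - y` is `p - n` with each of `p`, `n` either `0` or a
unit vector. The outer map is additive and sends a unit vector `e_a` to `±e_{⌈a/2⌉}`, so
`oddOuter x - p' = oddOuter y - n'` (with `p'`, `n'` the images of `p`, `n`) is a common point of the two
`ℛ_q`-balls, and single-error correction forces `oddOuter x = oddOuter y`. Modulo `q > 2` the outer map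
has no nonzero such `d` in its kernel: each pair difference lies in `[-2, 2]`, and equal entries of a
pair cannot both be `1` or both be `-1`. Hence `x = y`. The count holds because a word is determined by
its outer word together with its symbols at the odd positions `2j - 1`, which are free.
-/

open Finset Function

section RBall

variable {q m : ℕ}

theorem mem_RBall_iff_sub_mem_RBall_zero {c d : Fin m → ZMod q} :
    d ∈ RBall c ↔ d - c ∈ RBall 0 := by
  simp only [RBall, Set.mem_ofPred_eq, sub_eq_zero, Pi.sub_apply, Pi.zero_apply, zero_add,
    zero_sub]
  refine or_congr Iff.rfl (exists_congr fun i => and_congr (or_congr ?_ ?_) Iff.rfl)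
  · exact sub_eq_iff_eq_add'.symm
  · rw [sub_eq_iff_eq_add', sub_eq_add_neg]

theorem neg_mem_RBall_zero {u : Fin m → ZMod q} (hu : u ∈ RBall 0) : -u ∈ RBall 0 := by
  rcases hu with rfl | ⟨i, hi, hj⟩
  · exact Or.inl neg_zero
  · refine Or.inr ⟨i, ?_, fun j hji => by simp [hj j hji]⟩
    rcases hi with hi | hi <;> simp [hi]

theorem not_disjoint_RBall_of_sub_eq_sub {c c' u v : Fin m → ZMod q} (hu : u ∈ RBall 0)
    (hv : v ∈ RBall 0) (h : c - c' = u - v) : ¬Disjoint (RBall c) (RBall c') := by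
  have hcu : c - u = c' - v := by rw [sub_eq_sub_iff_sub_eq_sub, h]
  refine Set.not_disjoint_iff.2 ⟨c - u, ?_, ?_⟩
  · simpa [mem_RBall_iff_sub_mem_RBall_zero] using neg_mem_RBall_zero hu
  · simpa [hcu, mem_RBall_iff_sub_mem_RBall_zero] using neg_mem_RBall_zero hv

end RBall

theorem eq_zero_or_eq_single_of_sum_le_one {ι : Type*} [Fintype ι] [DecidableEq ι] {f : ι → ℤ}
    (h0 : ∀ i, 0 ≤ f i) (h1 : ∑ i, f i ≤ 1) : f = 0 ∨ ∃ a, f = Pi.single a 1 := by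
  refine or_iff_not_imp_left.2 fun hf => ?_
  obtain ⟨a, ha⟩ := Function.ne_iff.1 hf
  refine ⟨a, funext fun i => ?_⟩
  rcases eq_or_ne i a with rfl | hia
  · have := single_le_sum (fun i _ => h0 i) (mem_univ i)
    have := h0 i
    simp only [Pi.zero_apply, Pi.single_eq_same] at ha ⊢
    omega
  · have := add_le_sum (fun i _ => h0 i) (mem_univ a) (mem_univ i) hia.symm
    have := h0 a
    have := h0 i
    simp only [Pi.zero_apply, Pi.single_eq_of_ne hia] at ha ⊢
    omega

theorem sum_max_le_one_of_Dasym_le_one {n q : ℕ} {x y : Fin n → Fin q} (h : Dasym x y ≤ 1) :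
    ∑ i, max (((x i : ℕ) : ℤ) - (y i : ℕ)) 0 ≤ 1 ∧
      ∑ i, max (-(((x i : ℕ) : ℤ) - (y i : ℕ))) 0 ≤ 1 := by
  refine ⟨(le_max_right _ _).trans h, ?_⟩
  simpa only [Nasym, neg_sub] using (le_max_left _ _).trans h

theorem natCast_val_injective {q : ℕ} : Injective fun a : Fin q => ((a : ℕ) : ZMod q) := by
  intro a b h
  rw [ZMod.natCast_eq_natCast_iff', Nat.mod_eq_of_lt a.2, Nat.mod_eq_of_lt b.2] at h
  exact Fin.ext h

def oddInner (q m : ℕ) (z : Fin (2 * m - 1) → Fin q) : Fin (m - 1) → Fin q :=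
  fun s => z ⟨2 * (s + 1) - 1, by have := s.2; omega⟩

def pairDiff (m : ℕ) (d : Fin (2 * m - 1) → ℤ) : Fin m → ℤ := fun j =>
  if (j : ℕ) = 0 then d ⟨0, by have := j.2; omega⟩
  else d ⟨2 * j, by have := j.2; omega⟩ - d ⟨2 * j - 1, by have := j.2; omega⟩

section OddOuter

variable {q m : ℕ}

theorem oddOuter_sub_oddOuter (x y : Fin (2 * m - 1) → Fin q) :
    oddOuter q m x - oddOuter q m y =
      fun j => ((pairDiff m (fun i => ((x i : ℕ) : ℤ) - (y i : ℕ)) j : ℤ) : ZMod q) := by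
  funext j
  simp only [oddOuter, pairDiff, Pi.sub_apply]
  split_ifs <;> push_cast <;> ring

theorem pairDiff_sub (f g : Fin (2 * m - 1) → ℤ) :
    pairDiff m (f - g) = pairDiff m f - pairDiff m g := by
  funext j
  simp only [pairDiff, Pi.sub_apply]
  split_ifs <;> ring

theorem cast_pairDiff_single_mem_RBall_zero (a : Fin (2 * m - 1)) :
    (fun j => ((pairDiff m (Pi.single a 1) j : ℤ) : ZMod q)) ∈ RBall 0 := by
  refine Or.inr ⟨⟨((a : ℕ) + 1) / 2, by omega⟩, ?_, fun j hj => ?_⟩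
  · simp only [pairDiff, Pi.single_apply, Fin.ext_iff]
    split_ifs <;> first | omega | simp
  · simp only [pairDiff, Pi.single_apply, ne_eq, Fin.ext_iff] at hj ⊢
    split_ifs <;> first | omega | simp

theorem cast_pairDiff_mem_RBall_zero {f : Fin (2 * m - 1) → ℤ} (h0 : ∀ i, 0 ≤ f i)
    (h1 : ∑ i, f i ≤ 1) : (fun j => ((pairDiff m f j : ℤ) : ZMod q)) ∈ RBall 0 := by
  rcases eq_zero_or_eq_single_of_sum_le_one h0 h1 with rfl | ⟨a, rfl⟩
  · refine Or.inl (funext fun j => ?_)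
    simp [pairDiff]
  · exact cast_pairDiff_single_mem_RBall_zero a

theorem eq_zero_or_exists_pair_index {k : ℕ} (hk : k < 2 * m - 1) :
    k = 0 ∨ ∃ s, s + 1 < m ∧ (k = 2 * (s + 1) ∨ k = 2 * (s + 1) - 1) := by
  rcases Nat.eq_zero_or_pos k with h | h
  · exact Or.inl h
  · exact Or.inr ⟨(k - 1) / 2, by omega, by omega⟩

theorem eq_zero_of_cast_pairDiff_eq_zero (hq : 2 < q) {d : Fin (2 * m - 1) → ℤ}
    (hpos : ∑ i, max (d i) 0 ≤ 1) (hneg : ∑ i, max (-d i) 0 ≤ 1)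
    (h : ∀ j, (pairDiff m d j : ZMod q) = 0) : d = 0 := by
  have hle (i) : max (d i) 0 ≤ 1 ∧ max (-d i) 0 ≤ 1 :=
    ⟨(single_le_sum (fun i _ => le_max_right (d i) 0) (mem_univ i)).trans hpos,
      (single_le_sum (fun i _ => le_max_right (-d i) 0) (mem_univ i)).trans hneg⟩
  have hpair (i i') (hi : i ≠ i') : max (d i) 0 + max (d i') 0 ≤ 1 ∧
      max (-d i) 0 + max (-d i') 0 ≤ 1 :=
    ⟨(add_le_sum (fun i _ => le_max_right (d i) 0) (mem_univ i) (mem_univ i') hi).trans hpos,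
      (add_le_sum (fun i _ => le_max_right (-d i) 0) (mem_univ i) (mem_univ i') hi).trans hneg⟩
  -- `|pairDiff m d j| ≤ 2 < q`, so the congruence `pairDiff m d j ≡ 0 [ZMOD q]` is an equality.
  have hzero (j) : pairDiff m d j = 0 := by
    refine Int.eq_zero_of_abs_lt_dvd ((ZMod.intCast_zmod_eq_zero_iff_dvd _ _).1 (h j)) ?_
    simp only [pairDiff]
    split_ifs
    · have := hle ⟨0, by omega⟩
      rw [abs_lt]; omega
    · have := hle ⟨2 * j, by omega⟩
      have := hle ⟨2 * j - 1, by omega⟩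
      rw [abs_lt]; omega
  funext ⟨k, hk⟩
  rcases eq_zero_or_exists_pair_index hk with rfl | ⟨s, hs, hk' | hk'⟩
  · simpa [pairDiff] using hzero ⟨0, by omega⟩
  all_goals
    have hj := hzero ⟨s + 1, hs⟩
    have := hpair ⟨2 * (s + 1), by omega⟩ ⟨2 * (s + 1) - 1, by omega⟩
      (by simp only [ne_eq, Fin.ext_iff]; omega)
    simp only [pairDiff, Nat.add_one_ne_zero, if_false] at hj
    subst hk'
    simp only [Pi.zero_apply]
    omega

theorem not_disjoint_RBall_oddOuter_of_Dasym_le_one {x y : Fin (2 * m - 1) → Fin q}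
    (h : Dasym x y ≤ 1) : ¬Disjoint (RBall (oddOuter q m x)) (RBall (oddOuter q m y)) := by
  obtain ⟨hpos, hneg⟩ := sum_max_le_one_of_Dasym_le_one h
  refine not_disjoint_RBall_of_sub_eq_sub
    (cast_pairDiff_mem_RBall_zero (fun i => le_max_right _ 0) hpos)
    (cast_pairDiff_mem_RBall_zero (fun i => le_max_right _ 0) hneg) ?_
  rw [oddOuter_sub_oddOuter]
  funext j
  rw [Pi.sub_apply, ← Int.cast_sub, ← Pi.sub_apply (pairDiff m _), ← pairDiff_sub]
  congr
  funext i
  simp only [Pi.sub_apply]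
  omega

theorem eq_of_oddOuter_eq_of_Dasym_le_one (hq : 2 < q) {x y : Fin (2 * m - 1) → Fin q}
    (h : Dasym x y ≤ 1) (he : oddOuter q m x = oddOuter q m y) : x = y := by
  obtain ⟨hpos, hneg⟩ := sum_max_le_one_of_Dasym_le_one h
  have hd := eq_zero_of_cast_pairDiff_eq_zero hq hpos hneg fun j => by
    rw [← congr_fun (oddOuter_sub_oddOuter x y) j, he, sub_self, Pi.zero_apply]
  funext i
  have := congr_fun hd i
  simp only [Pi.zero_apply] at this
  exact Fin.ext (by omega)

theorem oddOuter_oddInner_injective :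
    Injective fun z : Fin (2 * m - 1) → Fin q => (oddOuter q m z, oddInner q m z) := by
  intro z z' h
  obtain ⟨houter, hinner⟩ := Prod.ext_iff.1 h
  funext ⟨k, hk⟩
  rcases eq_zero_or_exists_pair_index hk with rfl | ⟨s, hs, rfl | rfl⟩
  · apply natCast_val_injective
    simpa [oddOuter] using congr_fun houter ⟨0, by omega⟩
  · have ho := congr_fun houter ⟨s + 1, hs⟩
    have hi := congr_fun hinner ⟨s, by omega⟩
    simp only [oddOuter, oddInner, Nat.add_one_ne_zero, dif_neg, not_false_eq_true] at ho hi
    rw [hi, sub_left_inj] at ho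
    exact natCast_val_injective ho
  · exact congr_fun hinner ⟨s, by omega⟩

theorem ncard_setOf_oddOuter_mem [NeZero q] (C' : Set (Fin m → ZMod q)) :
    {z : Fin (2 * m - 1) → Fin q | oddOuter q m z ∈ C'}.ncard = q ^ (m - 1) * Nat.card C' := by
  have hbij := (Fintype.bijective_iff_injective_and_card _).2
    ⟨oddOuter_oddInner_injective (q := q) (m := m), by
      simp only [Fintype.card_pi, Fintype.card_fin, ZMod.card, prod_const, card_univ,
        Fintype.card_prod, ← pow_add]
      congr 1
      omega⟩
  have hset : {z : Fin (2 * m - 1) → Fin q | oddOuter q m z ∈ C'} =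
      (fun z => (oddOuter q m z, oddInner q m z)) ⁻¹' (C' ×ˢ Set.univ) := by
    ext
    simp
  rw [hset, Set.ncard_preimage_of_injective_subset_range hbij.1 (by simp [hbij.2.range_eq]),
    Set.ncard_prod, Set.ncard_univ, Nat.card_coe_set_eq, mul_comm]
  simp

end OddOuter

theorem concat_odd_one_code_general (q m : ℕ) (hq : 2 < q)
    (C' : Set (Fin m → ZMod q)) (K : ℕ) (hK : Nat.card C' = K)
    (hsec : ∀ c ∈ C', ∀ c' ∈ C', c ≠ c' → Disjoint (RBall c) (RBall c')) :
    Set.ncard {z : Fin (2 * m - 1) → Fin q | oddOuter q m z ∈ C'} = q ^ (m - 1) * K ∧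
    ∀ x y : Fin (2 * m - 1) → Fin q,
      oddOuter q m x ∈ C' → oddOuter q m y ∈ C' → x ≠ y → 2 ≤ Dasym x y := by
  have : NeZero q := ⟨by omega⟩
  refine ⟨by rw [ncard_setOf_oddOuter_mem, hK], fun x y hx hy hxy => ?_⟩
  by_contra! hlt
  have hclose : Dasym x y ≤ 1 := by omega
  have houter : oddOuter q m x = oddOuter q m y := by
    by_contra hne
    exact not_disjoint_RBall_oddOuter_of_Dasym_le_one hclose (hsec _ hx _ hy hne)
  exact hxy (eq_of_oddOuter_eq_of_Dasym_le_one hq hclose houter)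

/-- If `C' ⊆ ℤ_qᵐ` (with `q > 2`, `m ≥ 1`) is single-error-correcting for `ℛ_q` and
`|C'| = K`, then `C = {z ∈ {0,…,q-1}^{2m-1} : oddOuter z ∈ C'}` has cardinality
`q^{m-1}·K` and is a `1`-code of odd length `2m-1`: `Δ(x,y) ≥ 2` for distinct
`x, y ∈ C`. -/
theorem concat_odd_one_code (q m : ℕ) (hq : 2 < q) (hm : 1 ≤ m)
    (C' : Set (Fin m → ZMod q)) (K : ℕ) (hK : Nat.card C' = K)
    (hsec : ∀ c ∈ C', ∀ c' ∈ C', c ≠ c' → Disjoint (RBall c) (RBall c')) :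
    Set.ncard {z : Fin (2 * m - 1) → Fin q | oddOuter q m z ∈ C'} = q ^ (m - 1) * K ∧
    ∀ x y : Fin (2 * m - 1) → Fin q,
      oddOuter q m x ∈ C' → oddOuter q m y ∈ C' → x ≠ y → 2 ≤ Dasym x y :=
  concat_odd_one_code_general q m hq C' K hK hsec
end

section
/- Let q > 2 and let C' ⊆ ℤ_q^m be single-error-correcting for the channel ℛ_q. Then the concatenated code C = {z ∈ ℤ_q^{2m} : (z_{2j} − z_{2j−1})_{j=1,…,m} ∈ C'} corrects a single asymmetric 1-limited-magnitude error with wrap-around: for all distinct x, x̂ ∈ C and all e, ê ∈ {0,1}^{2m} each having at most one nonzero coordinate, one has x − e ≢ x̂ − ê coordinatewise mod q. -/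
/-- The word of pairwise differences `(z_{2j} - z_{2j-1})_{j=1,…,m}` of `z ∈ ℤ_q^{2m}`
(0-based: `z_{2j+1} - z_{2j}`). -/
def pairDiffZ (q m : ℕ) (z : Fin (2 * m) → ZMod q) : Fin m → ZMod q :=
  fun j => z ⟨2 * (j : ℕ) + 1, by have := j.isLt; omega⟩ -
           z ⟨2 * (j : ℕ), by have := j.isLt; omega⟩

/-! Subtracting a unit error at position `2j+1` (resp. `2j`) lowers (resp. raises) the `j`-th
pair difference by one, so `pairDiffZ` maps `x - e` into the `ℛ_q`-ball of `pairDiffZ x`.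
If `x - e = x' - e'`, the balls of the two inner codewords meet, hence `pairDiffZ x = pairDiffZ x'`
and `pairDiffZ e = pairDiffZ e'`. Since `1 ≠ -1` in `ℤ_q` for `q > 2`, a unit error is determined
by its pair differences, so `e = e'` and then `x = x'`. -/

lemma eq_zero_or_eq_single_one {ι : Type*} [Fintype ι] [DecidableEq ι] {e : ι → ℕ}
    (hcard : (Finset.univ.filter fun i => e i ≠ 0).card ≤ 1) (hle : ∀ i, e i ≤ 1) :
    e = 0 ∨ ∃ i, e = Pi.single i 1 := by
  refine or_iff_not_imp_left.mpr fun hne => ?_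
  obtain ⟨i, hi⟩ : ∃ i, e i ≠ 0 := Function.ne_iff.mp hne
  refine ⟨i, funext fun k => ?_⟩
  by_cases hk : k = i
  · subst hk; simp only [Pi.single_eq_same]; have := hle k; omega
  · rw [Pi.single_eq_of_ne hk]
    by_contra hek
    exact hk (Finset.card_le_one.mp hcard k (by simpa using hek) i (by simpa using hi))

def unitErrors (ι R : Type*) [DecidableEq ι] [Zero R] [One R] : Set (ι → R) :=
  insert 0 (Set.range fun i => Pi.single i 1)

lemma natCast_comp_mem_unitErrors {ι R : Type*} [Fintype ι] [DecidableEq ι]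
    [AddMonoidWithOne R] {e : ι → ℕ}
    (hcard : (Finset.univ.filter fun i => e i ≠ 0).card ≤ 1) (hle : ∀ i, e i ≤ 1) :
    (fun i => (e i : R)) ∈ unitErrors ι R := by
  rcases eq_zero_or_eq_single_one hcard hle with rfl | ⟨i, rfl⟩
  · exact Or.inl (funext fun _ => Nat.cast_zero)
  · refine Or.inr ⟨i, funext fun k => ?_⟩
    by_cases hk : k = i
    · subst hk; simp
    · simp [Pi.single_eq_of_ne hk]

lemma Pi.single_eq_single_iff_of_ne_zero {ι M : Type*} [DecidableEq ι] [Zero M] {i j : ι}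
    {a b : M} (ha : a ≠ 0) : (Pi.single i a : ι → M) = Pi.single j b ↔ i = j ∧ a = b := by
  refine ⟨fun h => ?_, by rintro ⟨rfl, rfl⟩; rfl⟩
  have hi := congrFun h i
  rw [Pi.single_eq_same, Pi.single_apply] at hi
  split_ifs at hi with hij
  · exact ⟨hij, hi⟩
  · exact absurd hi ha

lemma sub_single_mem_RBall {q m : ℕ} (c : Fin m → ZMod q) (j : Fin m) {a : ZMod q}
    (ha : a = 1 ∨ a = -1) : c - Pi.single j a ∈ RBall c := by
  refine Or.inr ⟨j, ?_, fun k hk => by simp [Pi.single_eq_of_ne hk]⟩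
  rcases ha with rfl | rfl <;> simp

def pairIndex {m : ℕ} (i : Fin (2 * m)) : Fin m := ⟨i / 2, by omega⟩

def pairSign (q : ℕ) {m : ℕ} (i : Fin (2 * m)) : ZMod q := if Even (i : ℕ) then -1 else 1

lemma pairDiffZ_sub {q m : ℕ} (x y : Fin (2 * m) → ZMod q) :
    pairDiffZ q m (x - y) = pairDiffZ q m x - pairDiffZ q m y := by
  funext j; simp only [pairDiffZ, Pi.sub_apply]; ring

lemma pairDiffZ_single_one {q m : ℕ} (i : Fin (2 * m)) :
    pairDiffZ q m (Pi.single i 1) = Pi.single (pairIndex i) (pairSign q i) := by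
  funext j
  simp only [pairDiffZ, pairIndex, pairSign, Pi.single_apply, Fin.ext_iff, Nat.even_iff]
  split_ifs <;> first | omega | simp

lemma pairSign_eq_one_or_eq_neg_one {q m : ℕ} (i : Fin (2 * m)) :
    pairSign q i = 1 ∨ pairSign q i = -1 := by
  unfold pairSign; split_ifs <;> simp

lemma pairSign_ne_zero {q m : ℕ} [Nontrivial (ZMod q)] (i : Fin (2 * m)) : pairSign q i ≠ 0 := by
  rcases pairSign_eq_one_or_eq_neg_one (q := q) i with h | h <;> simp [h]

lemma eq_of_pairIndex_eq_of_pairSign_eq {q m : ℕ} [Fact (2 < q)] {i i' : Fin (2 * m)}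
    (hidx : pairIndex i = pairIndex i') (hsign : pairSign q i = pairSign q i') : i = i' := by
  have hparity : (i : ℕ) % 2 = (i' : ℕ) % 2 := by
    unfold pairSign at hsign
    split_ifs at hsign with hi hi' hi'
    · rw [Nat.even_iff] at hi hi'; omega
    · exact absurd hsign ZMod.neg_one_ne_one
    · exact absurd hsign.symm ZMod.neg_one_ne_one
    · rw [Nat.not_even_iff] at hi hi'; omega
  have hhalf : (i : ℕ) / 2 = (i' : ℕ) / 2 := congrArg Fin.val hidx
  exact Fin.ext (by omega)

lemma pairDiffZ_zero {q m : ℕ} : pairDiffZ q m 0 = 0 := by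
  funext j; simp [pairDiffZ]

lemma pairDiffZ_sub_mem_RBall {q m : ℕ} (x : Fin (2 * m) → ZMod q) {ε : Fin (2 * m) → ZMod q}
    (hε : ε ∈ unitErrors (Fin (2 * m)) (ZMod q)) :
    pairDiffZ q m x - pairDiffZ q m ε ∈ RBall (pairDiffZ q m x) := by
  rcases hε with rfl | ⟨i, rfl⟩
  · exact Or.inl (by rw [pairDiffZ_zero, sub_zero])
  · rw [pairDiffZ_single_one]
    exact sub_single_mem_RBall _ _ (pairSign_eq_one_or_eq_neg_one i)

lemma pairDiffZ_injOn_unitErrors {q m : ℕ} (hq : 2 < q) :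
    Set.InjOn (pairDiffZ q m) (unitErrors (Fin (2 * m)) (ZMod q)) := by
  have : Fact (1 < q) := ⟨by omega⟩
  have : Fact (2 < q) := ⟨hq⟩
  rintro _ (rfl | ⟨i, rfl⟩) _ (rfl | ⟨i', rfl⟩) h
  · rfl
  · simp [pairDiffZ_zero, pairDiffZ_single_one, eq_comm, pairSign_ne_zero] at h
  · simp [pairDiffZ_zero, pairDiffZ_single_one, pairSign_ne_zero] at h
  · rw [pairDiffZ_single_one, pairDiffZ_single_one,
      Pi.single_eq_single_iff_of_ne_zero (pairSign_ne_zero i)] at h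
    rw [eq_of_pairIndex_eq_of_pairSign_eq h.1 h.2]

/-- If `C' ⊆ ℤ_qᵐ` (with `q > 2`) is single-error-correcting for `ℛ_q`, then the
concatenated code `C = {z ∈ ℤ_q^{2m} : pairDiffZ z ∈ C'}` corrects a single asymmetric
`1`-limited-magnitude error with wrap-around: for distinct `x, x' ∈ C` and error words
`e, e' ∈ {0,1}^{2m}`, each with at most one nonzero coordinate,
`x - e ≢ x' - e' (mod q)`. -/
theorem concat_corrects_limited_magnitude_wrap (q m : ℕ) (hq : 2 < q)
    (C' : Set (Fin m → ZMod q))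
    (hsec : ∀ c ∈ C', ∀ c' ∈ C', c ≠ c' → Disjoint (RBall c) (RBall c')) :
    ∀ x x' : Fin (2 * m) → ZMod q,
      pairDiffZ q m x ∈ C' → pairDiffZ q m x' ∈ C' → x ≠ x' →
      ∀ e e' : Fin (2 * m) → ℕ,
        (Finset.univ.filter fun i => e i ≠ 0).card ≤ 1 → (∀ i, e i ≤ 1) →
        (Finset.univ.filter fun i => e' i ≠ 0).card ≤ 1 → (∀ i, e' i ≤ 1) →
        ¬(∀ i, x i - (e i : ZMod q) = x' i - (e' i : ZMod q)) := by
  intro x x' hx hx' hne e e' hcard hle hcard' hle' h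
  set ε : Fin (2 * m) → ZMod q := fun i => e i
  set ε' : Fin (2 * m) → ZMod q := fun i => e' i
  have hε : ε ∈ unitErrors _ _ := natCast_comp_mem_unitErrors hcard hle
  have hε' : ε' ∈ unitErrors _ _ := natCast_comp_mem_unitErrors hcard' hle'
  have hdiff : pairDiffZ q m x - pairDiffZ q m ε = pairDiffZ q m x' - pairDiffZ q m ε' := by
    rw [← pairDiffZ_sub, ← pairDiffZ_sub]
    exact congrArg _ (funext h)
  have hcode : pairDiffZ q m x = pairDiffZ q m x' := by
    by_contra hcode
    exact Set.disjoint_left.mp (hsec _ hx _ hx' hcode) (pairDiffZ_sub_mem_RBall x hε)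
      (hdiff ▸ pairDiffZ_sub_mem_RBall x' hε')
  have herr : ε = ε' :=
    pairDiffZ_injOn_unitErrors hq hε hε' (sub_right_injective (hcode ▸ hdiff))
  exact hne (funext fun i => by linear_combination h i + congrFun herr i)
end
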